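/- Let k be a positive integer and let ℓ_q(k) denote the sum of the digits of k written in base q. Then for every integer d with (q-1)·d > ℓ_q(k), the power sum S_d(k) = Σ_{a monic, deg a = d} a^k, the sum ranging over all monic polynomials a of degree d in F_q[θ], is equal to 0 in F_q[θ]. (Consequently ζ_A(x,-k) = Σ_{d≥0} S_d(k) x^{-d} is a polynomial in x^{-1}.) -/

import Mathlib

/-!
A monic polynomial of degree `d` is `X ^ d + ∑ i < d, c i • X ^ i` with `c ∈ 𝔽_q ^ d`. Write
`k = ∑ kᵣ qʳ` in base `q`. Since `x ↦ x ^ q` is additive and fixes `𝔽_q`,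
`(X ^ d + ∑ c i • X ^ i) ^ k = ∏ᵣ (X ^ (d qʳ) + ∑ c i • X ^ (i qʳ)) ^ kᵣ`, which is a polynomial
in the coordinates `c i` of total degree at most `∑ kᵣ = ℓ_q(k)`. As in the proof of the
Chevalley–Warning theorem, the sum over `𝔽_q ^ d` of a polynomial of total degree `< (q - 1) d`
vanishes.
-/

/-- The power sum `S_d(k) = Σ a^k`, where `a` ranges over all monic polynomials of
degree `d` in `A = F_q[θ]`. -/
noncomputable def powerSum (Fq : Type) [Field Fq] [Fintype Fq] (d k : ℕ) : Polynomial Fq :=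
  ∑ᶠ a ∈ {a : Polynomial Fq | a.Monic ∧ a.natDegree = d}, a ^ k

namespace MvPolynomial

variable {K R σ : Type*} [Field K] [CommRing R] [Algebra K R] [Fintype σ]

theorem totalDegree_C_add_sum_C_mul_X_le (a₀ : R) (a : σ → R) :
    (C a₀ + ∑ i, C (a i) * X i : MvPolynomial σ R).totalDegree ≤ 1 := by
  refine (totalDegree_add _ _).trans <| max_le (by simp) <| totalDegree_finsetSum_le fun i _ => ?_
  simpa [C_mul_X_eq_monomial] using totalDegree_monomial_le (Finsupp.single i 1) (a i)

theorem eval_C_add_sum_C_mul_X (a₀ : R) (a : σ → R) (c : σ → K) :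
    eval (algebraMap K R ∘ c) (C a₀ + ∑ i, C (a i) * X i) = a₀ + ∑ i, c i • a i := by
  simp [Algebra.smul_def, mul_comm]

variable [Fintype K] [DecidableEq σ]

theorem sum_eval_algebraMap_eq_zero (f : MvPolynomial σ R)
    (h : f.totalDegree < (Fintype.card K - 1) * Fintype.card σ) :
    ∑ x : σ → K, eval (algebraMap K R ∘ x) f = 0 := by
  have hmonomial : ∀ s ∈ f.support, ∑ x : σ → K, ∏ i, x i ^ s i = 0 := fun s hs => by
    simpa [eval_monomial, Finsupp.prod_fintype] using
      sum_eval_eq_zero (monomial s (1 : K)) ((totalDegree_monomial s one_ne_zero).trans_le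
        (le_totalDegree hs) |>.trans_lt h)
  simp only [eval_eq', Function.comp_apply, ← map_pow, ← map_prod]
  rw [Finset.sum_comm]
  refine Finset.sum_eq_zero fun s hs => ?_
  rw [← Finset.mul_sum, ← map_sum, hmonomial s hs, map_zero, mul_zero]

end MvPolynomial

namespace FiniteField

open MvPolynomial

variable {K R σ : Type*} [Field K] [Fintype K] [CommRing R] [Algebra K R] [Fintype σ]

theorem add_sum_smul_pow_card (a₀ : R) (a : σ → R) (c : σ → K) :
    (a₀ + ∑ i, c i • a i) ^ Fintype.card K =
      a₀ ^ Fintype.card K + ∑ i, c i • a i ^ Fintype.card K := by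
  change frobeniusAlgHom K R _ = _
  simp only [map_add, map_sum, map_smul, frobeniusAlgHom_apply]

theorem exists_totalDegree_le_digits_sum_eval_eq (k : ℕ) (a₀ : R) (a : σ → R) :
    ∃ f : MvPolynomial σ R, f.totalDegree ≤ (Nat.digits (Fintype.card K) k).sum ∧
      ∀ c : σ → K, eval (algebraMap K R ∘ c) f = (a₀ + ∑ i, c i • a i) ^ k := by
  induction k using Nat.strong_induction_on generalizing a₀ a with
  | _ k ih =>
    rcases k.eq_zero_or_pos with rfl | hk
    · exact ⟨1, by simp, by simp⟩
    set q := Fintype.card K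
    have hq : 1 < q := Fintype.one_lt_card
    -- `k = k % q + q * (k / q)`, and the `q`-th power of an affine form is the affine form
    -- with `q`-th powers as coefficients.
    obtain ⟨f, hf_deg, hf_eval⟩ :=
      ih (k / q) (Nat.div_lt_self hk hq) (a₀ ^ q) (fun i => a i ^ q)
    refine ⟨(C a₀ + ∑ i, C (a i) * X i) ^ (k % q) * f, ?_, fun c => ?_⟩
    · rw [Nat.digits_def' hq hk, List.sum_cons]
      refine (totalDegree_mul _ _).trans (add_le_add ((totalDegree_pow _ _).trans ?_) hf_deg)
      simpa using Nat.mul_le_mul_left (k % q) (totalDegree_C_add_sum_C_mul_X_le a₀ a)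
    · rw [map_mul, map_pow, eval_C_add_sum_C_mul_X, hf_eval, ← add_sum_smul_pow_card a₀ a c,
        ← pow_mul, ← pow_add, Nat.mod_add_div]

theorem sum_add_sum_smul_pow_eq_zero_of_digits_sum_lt [DecidableEq σ] (a₀ : R) (a : σ → R)
    {k : ℕ} (hk : (Nat.digits (Fintype.card K) k).sum < (Fintype.card K - 1) * Fintype.card σ) :
    ∑ c : σ → K, (a₀ + ∑ i, c i • a i) ^ k = 0 := by
  obtain ⟨f, hf_deg, hf_eval⟩ := exists_totalDegree_le_digits_sum_eval_eq (K := K) k a₀ a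
  simp_rw [← hf_eval]
  exact sum_eval_algebraMap_eq_zero f (hf_deg.trans_lt hk)

end FiniteField

namespace Polynomial

theorem finsum_mem_monic_natDegree_eq {R M : Type*} [CommRing R] [Nontrivial R]
    [AddCommMonoid M] (d : ℕ) (g : R[X] → M) :
    ∑ᶠ p ∈ {p : R[X] | p.Monic ∧ p.natDegree = d}, g p =
      ∑ᶠ c : Fin d → R, g (X ^ d + ∑ i : Fin d, c i • X ^ (i : ℕ)) := by
  rw [← finsum_set_coe_eq_finsum_mem]
  refine (finsum_comp_equiv (f := fun p : {p : R[X] // p.Monic ∧ p.natDegree = d} => g p)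
    ((monicEquivDegreeLT d).trans (degreeLTEquiv R d).toEquiv).symm).symm.trans
    (finsum_congr fun c => ?_)
  simp [monicEquivDegreeLT, degreeLTEquiv, smul_X_eq_monomial]

end Polynomial

theorem powerSum_eq_zero_of_digitSum_lt_general
    (Fq : Type) [Field Fq] [Fintype Fq] (q : ℕ)
    (hcard : Fintype.card Fq = q)
    (k : ℕ) (d : ℕ)
    (hd : (Nat.digits q k).sum < (q - 1) * d) :
    powerSum Fq d k = 0 := by
  subst hcard
  rw [powerSum, Polynomial.finsum_mem_monic_natDegree_eq, finsum_eq_sum_of_fintype]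
  exact FiniteField.sum_add_sum_smul_pow_eq_zero_of_digits_sum_lt _ _ (by simpa using hd)

/-- If `(q-1)·d` exceeds the sum of the base-`q` digits of `k`, then the power sum
`S_d(k) = Σ_{a monic, deg a = d} a^k` vanishes in `F_q[θ]`. -/
theorem powerSum_eq_zero_of_digitSum_lt
    (p m₀ : ℕ) (hp : p.Prime) (hm₀ : 0 < m₀)
    (Fq : Type) [Field Fq] [Fintype Fq] (q : ℕ) (hq : q = p ^ m₀)
    (hcard : Fintype.card Fq = q)
    (k : ℕ) (hk : 0 < k) (d : ℕ)
    (hd : (Nat.digits q k).sum < (q - 1) * d) :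
    powerSum Fq d k = 0 :=
  powerSum_eq_zero_of_digitSum_lt_general Fq q hcard k d hd
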